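/- For every h ∈ L²(0,1) one has ‖K K* h − Q_m* Q_m h‖_{L²(0,1)} ≤ (C_K²/(6m²))·‖h‖_{L²(0,1)}, where (K K* h)(x) = ∫₀¹ h(z)·(∫₀¹ κ(x,y) κ(z,y) dy) dz and (Q_m* Q_m h)(x) = (1/m)·Σ_{l=1}^m κ(x, ξ_{l,m})·∫₀¹ κ(z, ξ_{l,m}) h(z) dz. -/

import Mathlib

open Real MeasureTheory

/-- The unit interval `[0,1]`. -/
def I01 : Set ℝ := Set.Icc 0 1

/-- `κ : [0,1]² → ℝ` is twice continuously differentiable, with partial derivatives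
`κ10 = ∂ₓκ`, `κ01 = ∂ᵧκ`, `κ20 = ∂ₓ²κ`, `κ11 = ∂ₓ∂ᵧκ`, `κ02 = ∂ᵧ²κ`, and
`CK` bounds the absolute values of `κ` and all its partial derivatives of order `≤ 2`
on `[0,1]²` (in the paper, `CK` is the supremum of these quantities). -/
def IsC2KernelWith (κ κ10 κ01 κ20 κ11 κ02 : ℝ → ℝ → ℝ) (CK : ℝ) : Prop :=
  (∀ x ∈ I01, ∀ y ∈ I01, HasDerivWithinAt (fun x' => κ x' y) (κ10 x y) I01 x) ∧
  (∀ x ∈ I01, ∀ y ∈ I01, HasDerivWithinAt (fun y' => κ x y') (κ01 x y) I01 y) ∧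
  (∀ x ∈ I01, ∀ y ∈ I01, HasDerivWithinAt (fun x' => κ10 x' y) (κ20 x y) I01 x) ∧
  (∀ x ∈ I01, ∀ y ∈ I01, HasDerivWithinAt (fun y' => κ10 x y') (κ11 x y) I01 y) ∧
  (∀ x ∈ I01, ∀ y ∈ I01, HasDerivWithinAt (fun y' => κ01 x y') (κ02 x y) I01 y) ∧
  ContinuousOn (fun p : ℝ × ℝ => κ p.1 p.2) (I01 ×ˢ I01) ∧
  ContinuousOn (fun p : ℝ × ℝ => κ10 p.1 p.2) (I01 ×ˢ I01) ∧
  ContinuousOn (fun p : ℝ × ℝ => κ01 p.1 p.2) (I01 ×ˢ I01) ∧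
  ContinuousOn (fun p : ℝ × ℝ => κ20 p.1 p.2) (I01 ×ˢ I01) ∧
  ContinuousOn (fun p : ℝ × ℝ => κ11 p.1 p.2) (I01 ×ˢ I01) ∧
  ContinuousOn (fun p : ℝ × ℝ => κ02 p.1 p.2) (I01 ×ˢ I01) ∧
  (∀ x ∈ I01, ∀ y ∈ I01,
    |κ x y| ≤ CK ∧ |κ10 x y| ≤ CK ∧ |κ01 x y| ≤ CK ∧
    |κ20 x y| ≤ CK ∧ |κ11 x y| ≤ CK ∧ |κ02 x y| ≤ CK)

/-- The midpoint grid points `ξ_{l,m} = (2l−1)/(2m)`. -/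
noncomputable def gridPt (m l : ℕ) : ℝ := (2 * (l : ℝ) - 1) / (2 * (m : ℝ))

/-!
`K K* - Q_m* Q_m` is the integral operator with kernel
`gramKernel κ x z - midpointGramKernel κ m x z`, the error of the composite midpoint rule for
`y ↦ κ x y * κ z y`, whose second derivative is bounded by `4 C_K²`. On a cell `[c - r, c + r]` the
midpoint error is `∫₀ʳ (f (c + u) + f (c - u) - 2 f c) du`, and the integrand is at most `M u²`
when `|f''| ≤ M`, because its derivative `f' (c + u) - f' (c - u)` is at most `2 M u`; summing
`M r³ / 3` over the `m` cells of half-width `1 / (2m)` bounds the kernel by `C_K² / (6 m²)`. On the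
probability space `(0, 1]` an integral operator with kernel bounded by `ε` maps `L²` to `L^∞` with
norm at most `ε`, since `∫ |h| ≤ ‖h‖₂`, and the `L²` norm is at most the `L^∞` norm.
-/

open Set

section MidpointRule

variable {f f' f'' : ℝ → ℝ} {c r M : ℝ}

theorem abs_add_sub_two_mul_le_mul_sq
    (hf : ∀ t ∈ Icc (c - r) (c + r), HasDerivWithinAt f (f' t) (Icc (c - r) (c + r)) t)
    (hf' : ∀ t ∈ Icc (c - r) (c + r), HasDerivWithinAt f' (f'' t) (Icc (c - r) (c + r)) t)
    (hM : ∀ t ∈ Icc (c - r) (c + r), |f'' t| ≤ M) {u : ℝ} (hu : u ∈ Icc 0 r) :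
    |f (c + u) + f (c - u) - 2 * f c| ≤ M * u ^ 2 := by
  have hplus : MapsTo (c + ·) (Icc 0 r) (Icc (c - r) (c + r)) := fun v hv =>
    ⟨by linarith [hv.1, hv.2], by linarith [hv.1, hv.2]⟩
  have hminus : MapsTo (c - ·) (Icc 0 r) (Icc (c - r) (c + r)) := fun v hv =>
    ⟨by linarith [hv.1, hv.2], by linarith [hv.1, hv.2]⟩
  have hderiv : ∀ v ∈ Icc 0 r, HasDerivWithinAt (fun v => f (c + v) + f (c - v) - 2 * f c)
      (f' (c + v) - f' (c - v)) (Icc 0 r) v := by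
    intro v hv
    have h₁ := (hf _ (hplus hv)).comp v ((hasDerivAt_id v).const_add c).hasDerivWithinAt hplus
    have h₂ := (hf _ (hminus hv)).comp v ((hasDerivAt_id v).const_sub c).hasDerivWithinAt hminus
    exact ((h₁.add h₂).sub_const (2 * f c)).congr_deriv (by simp only [mul_one, mul_neg]; ring)
  have hbound : ∀ v ∈ Icc 0 r, |f' (c + v) - f' (c - v)| ≤ M * (2 * v) := by
    intro v hv
    have := (convex_Icc _ _).norm_image_sub_le_of_norm_hasDerivWithin_le hf' hM
      (hminus hv) (hplus hv)
    simp only [Real.norm_eq_abs, show c + v - (c - v) = 2 * v by ring] at this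
    rwa [abs_of_nonneg (show 0 ≤ 2 * v by linarith [hv.1])] at this
  have := image_norm_le_of_norm_deriv_right_le_deriv_boundary
    (fun v hv => (hderiv v hv).continuousWithinAt)
    (fun v hv => (hderiv v (Ico_subset_Icc_self hv)).mono_of_mem_nhdsWithin
      (Filter.mem_of_superset (Icc_mem_nhdsGE hv.2) (Icc_subset_Icc_left hv.1)))
    (B := fun v => M * v ^ 2) (by simp [two_mul])
    (fun v => by simpa [mul_comm, mul_assoc] using (hasDerivAt_pow 2 v).const_mul M)
    (fun v hv => hbound v (Ico_subset_Icc_self hv)) hu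
  simpa using this

theorem abs_integral_sub_midpoint_le (hr : 0 ≤ r)
    (hf : ∀ t ∈ Icc (c - r) (c + r), HasDerivWithinAt f (f' t) (Icc (c - r) (c + r)) t)
    (hf' : ∀ t ∈ Icc (c - r) (c + r), HasDerivWithinAt f' (f'' t) (Icc (c - r) (c + r)) t)
    (hM : ∀ t ∈ Icc (c - r) (c + r), |f'' t| ≤ M) :
    |(∫ t in c - r..c + r, f t) - 2 * r * f c| ≤ M * r ^ 3 / 3 := by
  have hcont : ContinuousOn f (Icc (c - r) (c + r)) := fun t ht => (hf t ht).continuousWithinAt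
  have hleft : IntervalIntegrable f volume (c - r) c :=
    (hcont.mono (Icc_subset_Icc_right (by linarith))).intervalIntegrable_of_Icc (by linarith)
  have hright : IntervalIntegrable f volume c (c + r) :=
    (hcont.mono (Icc_subset_Icc_left (by linarith))).intervalIntegrable_of_Icc (by linarith)
  have hplus : IntervalIntegrable (fun u => f (c + u)) volume 0 r :=
    (hcont.comp (continuous_const_add c).continuousOn fun u hu =>
      ⟨by linarith [hu.1], by linarith [hu.2]⟩).intervalIntegrable_of_Icc hr
  have hminus : IntervalIntegrable (fun u => f (c - u)) volume 0 r :=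
    (hcont.comp (continuous_sub_left c).continuousOn fun u hu =>
      ⟨by linarith [hu.2], by linarith [hu.1]⟩).intervalIntegrable_of_Icc hr
  have hsplit : (∫ t in c - r..c + r, f t) - 2 * r * f c
      = ∫ u in 0..r, (f (c + u) + f (c - u) - 2 * f c) := by
    rw [intervalIntegral.integral_sub (hplus.add hminus) intervalIntegrable_const,
      intervalIntegral.integral_add hplus hminus,
      intervalIntegral.integral_comp_add_left, intervalIntegral.integral_comp_sub_left,
      ← intervalIntegral.integral_add_adjacent_intervals hleft hright]
    simp only [add_zero, sub_zero, intervalIntegral.integral_const, smul_eq_mul]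
    ring
  rw [hsplit]
  calc |∫ u in 0..r, (f (c + u) + f (c - u) - 2 * f c)|
      ≤ ∫ u in 0..r, M * u ^ 2 := by
        simpa only [Real.norm_eq_abs] using intervalIntegral.norm_integral_le_of_norm_le
          (f := fun u => f (c + u) + f (c - u) - 2 * f c) hr (ae_of_all _ fun u hu =>
          abs_add_sub_two_mul_le_mul_sq hf hf' hM (Ioc_subset_Icc_self hu))
          ((by fun_prop : Continuous fun u : ℝ => M * u ^ 2).intervalIntegrable _ _)
    _ = M * r ^ 3 / 3 := by
      rw [intervalIntegral.integral_const_mul, integral_pow]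
      ring

lemma gridPt_succ_sub {m : ℕ} (hm : 0 < m) (i : ℕ) :
    gridPt m (i + 1) - 1 / (2 * m) = i / m := by
  unfold gridPt; field_simp; push_cast; ring

lemma gridPt_succ_add {m : ℕ} (hm : 0 < m) (i : ℕ) :
    gridPt m (i + 1) + 1 / (2 * m) = (i + 1 : ℕ) / m := by
  unfold gridPt; field_simp; push_cast; ring

lemma Icc_cell_subset_I01 {m i : ℕ} (hi : i < m) :
    Icc ((i : ℝ) / m) ((i + 1 : ℕ) / m) ⊆ I01 :=
  Icc_subset_Icc (by positivity)
    ((div_le_one (Nat.cast_pos.mpr (i.zero_le.trans_lt hi))).mpr (by exact_mod_cast hi))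

theorem abs_integral_cell_sub_midpoint_le {m i : ℕ} (hi : i < m)
    (hf : ∀ t ∈ I01, HasDerivWithinAt f (f' t) I01 t)
    (hf' : ∀ t ∈ I01, HasDerivWithinAt f' (f'' t) I01 t)
    (hM : ∀ t ∈ I01, |f'' t| ≤ M) :
    |(∫ t in (i / m : ℝ)..((i + 1 : ℕ) / m), f t) - 1 / m * f (gridPt m (i + 1))|
      ≤ M * (1 / (2 * m)) ^ 3 / 3 := by
  have hm : 0 < m := i.zero_le.trans_lt hi
  have hcell := Icc_cell_subset_I01 hi
  have := abs_integral_sub_midpoint_le (f := f) (f' := f') (f'' := f'') (M := M)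
    (c := gridPt m (i + 1)) (r := 1 / (2 * m)) (by positivity)
    (fun t ht => ?_) (fun t ht => ?_) (fun t ht => ?_)
  · rwa [gridPt_succ_sub hm, gridPt_succ_add hm, show 2 * (1 / (2 * m)) = (1 / m : ℝ)
      by field_simp] at this
  all_goals simp only [gridPt_succ_sub hm, gridPt_succ_add hm] at ht ⊢
  · exact (hf t (hcell ht)).mono hcell
  · exact (hf' t (hcell ht)).mono hcell
  · exact hM t (hcell ht)

theorem abs_integral_sub_midpoint_sum_le {m : ℕ} (hm : 0 < m)
    (hf : ∀ t ∈ I01, HasDerivWithinAt f (f' t) I01 t)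
    (hf' : ∀ t ∈ I01, HasDerivWithinAt f' (f'' t) I01 t)
    (hM : ∀ t ∈ I01, |f'' t| ≤ M) :
    |(∫ t in (0:ℝ)..1, f t) - 1 / m * ∑ l ∈ Finset.Icc 1 m, f (gridPt m l)|
      ≤ M / (24 * m ^ 2) := by
  have hcont : ContinuousOn f I01 := fun t ht => (hf t ht).continuousWithinAt
  have hsum : (∫ t in (0:ℝ)..1, f t)
      = ∑ i ∈ Finset.range m, ∫ t in (i / m : ℝ)..((i + 1 : ℕ) / m), f t := by
    have := intervalIntegral.sum_integral_adjacent_intervals (f := f) (μ := volume)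
      (a := fun i : ℕ => (i / m : ℝ)) (n := m) ?_
    · simpa [hm.ne'] using this.symm
    intro i hi
    refine (hcont.mono (Icc_cell_subset_I01 hi)).intervalIntegrable_of_Icc ?_
    gcongr
    exact_mod_cast i.le_succ
  have hgrid : ∑ l ∈ Finset.Icc 1 m, f (gridPt m l)
      = ∑ i ∈ Finset.range m, f (gridPt m (i + 1)) := by
    rw [Finset.range_eq_Ico, Finset.sum_Ico_add' (fun l => f (gridPt m l)),
      Finset.Ico_add_one_right_eq_Icc, zero_add]
  calc _ = |∑ i ∈ Finset.range m,
          ((∫ t in (i / m : ℝ)..((i + 1 : ℕ) / m), f t) - 1 / m * f (gridPt m (i + 1)))| := by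
        rw [hsum, hgrid, Finset.sum_sub_distrib, Finset.mul_sum]
    _ ≤ ∑ _i ∈ Finset.range m, M * (1 / (2 * m)) ^ 3 / 3 :=
        (Finset.abs_sum_le_sum_abs _ _).trans (Finset.sum_le_sum fun i hi =>
          abs_integral_cell_sub_midpoint_le (Finset.mem_range.mp hi) hf hf' hM)
    _ = M / (24 * m ^ 2) := by
        rw [Finset.sum_const, Finset.card_range, nsmul_eq_mul]
        field_simp
        ring

end MidpointRule

section ProbabilityMeasure

variable {Ω : Type*} [MeasurableSpace Ω] {μ : Measure Ω} [IsProbabilityMeasure μ]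

lemma integral_abs_le_sqrt_integral_sq {h : Ω → ℝ} (hh : MemLp h 2 μ) :
    ∫ ω, |h ω| ∂μ ≤ √(∫ ω, h ω ^ 2 ∂μ) := by
  have hvar := ProbabilityTheory.variance_nonneg |h| μ
  rw [ProbabilityTheory.variance_eq_sub hh.abs] at hvar
  refine Real.le_sqrt_of_sq_le ?_
  simpa [sq_abs] using hvar

lemma abs_integral_mul_le_of_abs_le {h D : Ω → ℝ} {ε : ℝ} (hh : MemLp h 2 μ)
    (hD : ∀ᵐ ω ∂μ, |D ω| ≤ ε) :
    |∫ ω, h ω * D ω ∂μ| ≤ ε * √(∫ ω, h ω ^ 2 ∂μ) := by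
  obtain ⟨ω₀, hω₀⟩ := hD.exists
  have hε : 0 ≤ ε := (abs_nonneg _).trans hω₀
  calc |∫ ω, h ω * D ω ∂μ| ≤ ∫ ω, |h ω| * ε ∂μ := by
        refine abs_integral_le_integral_abs.trans (integral_mono_of_nonneg
          (ae_of_all _ fun _ => abs_nonneg _) ((hh.integrable one_le_two).abs.mul_const ε) ?_)
        filter_upwards [hD] with ω hω
        rw [abs_mul]
        exact mul_le_mul_of_nonneg_left hω (abs_nonneg _)
    _ = ε * ∫ ω, |h ω| ∂μ := by rw [integral_mul_const, mul_comm]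
    _ ≤ ε * √(∫ ω, h ω ^ 2 ∂μ) :=
        mul_le_mul_of_nonneg_left (integral_abs_le_sqrt_integral_sq hh) hε

lemma sqrt_integral_sq_le_of_abs_le {T : Ω → ℝ} {C : ℝ} (hT : ∀ᵐ ω ∂μ, |T ω| ≤ C) :
    √(∫ ω, T ω ^ 2 ∂μ) ≤ C := by
  obtain ⟨ω₀, hω₀⟩ := hT.exists
  refine Real.sqrt_le_iff.mpr ⟨(abs_nonneg _).trans hω₀, ?_⟩
  calc ∫ ω, T ω ^ 2 ∂μ ≤ ∫ _ω, C ^ 2 ∂μ := by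
        refine integral_mono_of_nonneg (ae_of_all _ fun _ => sq_nonneg _) (integrable_const _) ?_
        filter_upwards [hT] with ω hω
        rw [← sq_abs]
        exact pow_le_pow_left₀ (abs_nonneg _) hω 2
    _ = C ^ 2 := by simp

end ProbabilityMeasure

instance : IsProbabilityMeasure (volume.restrict (Ioc (0 : ℝ) 1)) := ⟨by simp⟩

noncomputable def gramKernel (κ : ℝ → ℝ → ℝ) (x z : ℝ) : ℝ := ∫ y in (0:ℝ)..1, κ x y * κ z y

noncomputable def midpointGramKernel (κ : ℝ → ℝ → ℝ) (m : ℕ) (x z : ℝ) : ℝ :=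
  1 / m * ∑ l ∈ Finset.Icc 1 m, κ x (gridPt m l) * κ z (gridPt m l)

lemma gridPt_mem_I01 {m l : ℕ} (hl : l ∈ Finset.Icc 1 m) : gridPt m l ∈ I01 := by
  obtain ⟨h1, h2⟩ := Finset.mem_Icc.mp hl
  have h1' : (1 : ℝ) ≤ l := by exact_mod_cast h1
  have h2' : (l : ℝ) ≤ m := by exact_mod_cast h2
  exact ⟨div_nonneg (by linarith) (by linarith), (div_le_one (by linarith)).mpr (by linarith)⟩

lemma abs_mul_le_sq_of_abs_le {p q C : ℝ} (hp : |p| ≤ C) (hq : |q| ≤ C) : |p * q| ≤ C ^ 2 := by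
  rw [abs_mul, sq]
  exact mul_le_mul hp hq (abs_nonneg q) ((abs_nonneg p).trans hp)

lemma aestronglyMeasurable_gramKernel {κ : ℝ → ℝ → ℝ}
    (hκ : ContinuousOn (fun p : ℝ × ℝ => κ p.1 p.2) (I01 ×ˢ I01)) {x : ℝ} (hx : x ∈ I01) :
    AEStronglyMeasurable (gramKernel κ x) (volume.restrict (Ioc 0 1)) := by
  have hsub : Ioc (0 : ℝ) 1 ⊆ I01 := Ioc_subset_Icc_self
  have hκx : ContinuousOn (fun p : ℝ × ℝ => κ x p.2) (I01 ×ˢ I01) :=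
    hκ.comp (by fun_prop : Continuous fun p : ℝ × ℝ => (x, p.2)).continuousOn
      fun p hp => ⟨hx, hp.2⟩
  have hcont : ContinuousOn (fun p : ℝ × ℝ => κ x p.2 * κ p.1 p.2) (Ioc 0 1 ×ˢ Ioc 0 1) :=
    (hκx.mul hκ).mono (prod_mono hsub hsub)
  have hmeas : AEStronglyMeasurable (fun p : ℝ × ℝ => κ x p.2 * κ p.1 p.2)
      ((volume.restrict (Ioc 0 1)).prod (volume.restrict (Ioc 0 1))) := by
    rw [Measure.prod_restrict, ← Measure.volume_eq_prod]
    exact hcont.aestronglyMeasurable (measurableSet_Ioc.prod measurableSet_Ioc)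
  refine hmeas.integral_prod_right'.congr (ae_of_all _ fun z => ?_)
  exact (intervalIntegral.integral_of_le zero_le_one).symm

namespace IsC2KernelWith

variable {κ κ10 κ01 κ20 κ11 κ02 : ℝ → ℝ → ℝ} {CK : ℝ}

lemma continuousOn (hker : IsC2KernelWith κ κ10 κ01 κ20 κ11 κ02 CK) :
    ContinuousOn (fun p : ℝ × ℝ => κ p.1 p.2) (I01 ×ˢ I01) := by
  obtain ⟨-, -, -, -, -, hκ, -⟩ := hker
  exact hκ

lemma abs_le (hker : IsC2KernelWith κ κ10 κ01 κ20 κ11 κ02 CK) {x y : ℝ} (hx : x ∈ I01)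
    (hy : y ∈ I01) : |κ x y| ≤ CK := by
  obtain ⟨-, -, -, -, -, -, -, -, -, -, -, hB⟩ := hker
  exact (hB x hx y hy).1

lemma abs_gramKernel_le (hker : IsC2KernelWith κ κ10 κ01 κ20 κ11 κ02 CK) {x z : ℝ}
    (hx : x ∈ I01) (hz : z ∈ I01) : |gramKernel κ x z| ≤ CK ^ 2 := by
  simpa [gramKernel] using intervalIntegral.norm_integral_le_of_norm_le_const (a := 0) (b := 1)
    (f := fun y => κ x y * κ z y)
    (fun y hy => abs_mul_le_sq_of_abs_le (hker.abs_le hx (Ioc_subset_Icc_self (by simpa using hy)))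
      (hker.abs_le hz (Ioc_subset_Icc_self (by simpa using hy))))

theorem abs_gramKernel_sub_midpointGramKernel_le
    (hker : IsC2KernelWith κ κ10 κ01 κ20 κ11 κ02 CK) {m : ℕ} (hm : 0 < m) {x z : ℝ}
    (hx : x ∈ I01) (hz : z ∈ I01) :
    |gramKernel κ x z - midpointGramKernel κ m x z| ≤ CK ^ 2 / (6 * m ^ 2) := by
  obtain ⟨-, hD01, -, -, hD02, -, -, -, -, -, -, hB⟩ := hker
  have hbound : ∀ y ∈ I01, |(κ02 x y * κ z y + κ01 x y * κ01 z y)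
      + (κ01 x y * κ01 z y + κ x y * κ02 z y)| ≤ 4 * CK ^ 2 := by
    intro y hy
    obtain ⟨bx, -, bx₁, -, -, bx₂⟩ := hB x hx y hy
    obtain ⟨bz, -, bz₁, -, -, bz₂⟩ := hB z hz y hy
    calc _ ≤ (|κ02 x y * κ z y| + |κ01 x y * κ01 z y|)
          + (|κ01 x y * κ01 z y| + |κ x y * κ02 z y|) :=
          (abs_add_le _ _).trans (add_le_add (abs_add_le _ _) (abs_add_le _ _))
      _ ≤ (CK ^ 2 + CK ^ 2) + (CK ^ 2 + CK ^ 2) := by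
          gcongr <;> exact abs_mul_le_sq_of_abs_le ‹_› ‹_›
      _ = 4 * CK ^ 2 := by ring
  have := abs_integral_sub_midpoint_sum_le (f := fun y => κ x y * κ z y) hm
    (fun y hy => (hD01 x hx y hy).mul (hD01 z hz y hy))
    (fun y hy => ((hD02 x hx y hy).mul (hD01 z hz y hy)).add
      ((hD01 x hx y hy).mul (hD02 z hz y hy))) hbound
  rw [show CK ^ 2 / (6 * m ^ 2) = 4 * CK ^ 2 / (24 * m ^ 2) by ring]
  exact this

theorem integral_mul_gramKernel_sub_eq
    (hker : IsC2KernelWith κ κ10 κ01 κ20 κ11 κ02 CK) (m : ℕ) {x : ℝ} (hx : x ∈ I01)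
    {h : ℝ → ℝ} (hh : Integrable h (volume.restrict (Ioc 0 1))) :
    (∫ z in (0:ℝ)..1, h z * gramKernel κ x z)
        - 1 / m * ∑ l ∈ Finset.Icc 1 m, κ x (gridPt m l) * ∫ z in (0:ℝ)..1, κ z (gridPt m l) * h z
      = ∫ z in Ioc 0 1, h z * (gramKernel κ x z - midpointGramKernel κ m x z) := by
  have hsub : Ioc (0 : ℝ) 1 ⊆ I01 := Ioc_subset_Icc_self
  have hκ := hker.continuousOn
  have hgram : Integrable (fun z => h z * gramKernel κ x z) (volume.restrict (Ioc 0 1)) :=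
    hh.mul_bdd (aestronglyMeasurable_gramKernel hκ hx) (ae_restrict_of_forall_mem
      measurableSet_Ioc fun z hz => hker.abs_gramKernel_le hx (hsub hz))
  have hcol : ∀ l ∈ Finset.Icc 1 m,
      Integrable (fun z => κ z (gridPt m l) * h z) (volume.restrict (Ioc 0 1)) := by
    intro l hl
    have hcont : ContinuousOn (fun z => κ z (gridPt m l)) I01 :=
      hκ.comp (by fun_prop : Continuous fun z : ℝ => (z, gridPt m l)).continuousOn
        fun z hz => ⟨hz, gridPt_mem_I01 hl⟩
    exact hh.bdd_mul ((hcont.mono hsub).aestronglyMeasurable measurableSet_Ioc)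
      (ae_restrict_of_forall_mem measurableSet_Ioc fun z hz =>
        hker.abs_le (hsub hz) (gridPt_mem_I01 hl))
  have hmid : ∀ z, h z * midpointGramKernel κ m x z
      = ∑ l ∈ Finset.Icc 1 m, 1 / m * (κ x (gridPt m l) * (κ z (gridPt m l) * h z)) := by
    intro z
    rw [midpointGramKernel, Finset.mul_sum, Finset.mul_sum]
    exact Finset.sum_congr rfl fun _ _ => by ring
  simp_rw [mul_sub, hmid]
  rw [integral_sub hgram (integrable_finsetSum _ fun l hl => ((hcol l hl).const_mul _).const_mul _),
    integral_finsetSum _ fun l hl => ((hcol l hl).const_mul _).const_mul _]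
  simp_rw [integral_const_mul, intervalIntegral.integral_of_le zero_le_one, Finset.mul_sum]

end IsC2KernelWith

/-- For every `h ∈ L²(0,1)`:
`‖KK*h − Q_m*Q_m h‖ ≤ (C_K²/(6m²))·‖h‖`, where
`(KK*h)(x) = ∫₀¹ h(z)(∫₀¹ κ(x,y)κ(z,y) dy) dz` and
`(Q_m*Q_m h)(x) = (1/m) Σ_{l=1}^m κ(x,ξ_{l,m}) ∫₀¹ κ(z,ξ_{l,m}) h(z) dz`. -/
theorem stmt_7 (κ κ10 κ01 κ20 κ11 κ02 : ℝ → ℝ → ℝ) (CK : ℝ)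
    (hker : IsC2KernelWith κ κ10 κ01 κ20 κ11 κ02 CK)
    (m : ℕ) (hm : 1 ≤ m)
    (h : ℝ → ℝ) (hh : MemLp h 2 (volume.restrict (Set.Ioc 0 1))) :
    Real.sqrt (∫ x in (0:ℝ)..1,
        ((∫ z in (0:ℝ)..1, h z * ∫ y in (0:ℝ)..1, κ x y * κ z y)
          - (1 / (m : ℝ)) * ∑ l ∈ Finset.Icc 1 m,
              κ x (gridPt m l) * ∫ z in (0:ℝ)..1, κ z (gridPt m l) * h z) ^ 2)
      ≤ CK ^ 2 / (6 * (m : ℝ) ^ 2) * Real.sqrt (∫ x in (0:ℝ)..1, h x ^ 2) := by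
  have hsub : Ioc (0 : ℝ) 1 ⊆ I01 := Ioc_subset_Icc_self
  rw [intervalIntegral.integral_of_le zero_le_one, intervalIntegral.integral_of_le zero_le_one]
  refine sqrt_integral_sq_le_of_abs_le (ae_restrict_of_forall_mem measurableSet_Ioc fun x hx => ?_)
  calc _ = |∫ z in Ioc 0 1, h z * (gramKernel κ x z - midpointGramKernel κ m x z)| :=
        congrArg abs (hker.integral_mul_gramKernel_sub_eq m (hsub hx) (hh.integrable one_le_two))
    _ ≤ _ := abs_integral_mul_le_of_abs_le hh (ae_restrict_of_forall_mem measurableSet_Ioc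
        fun z hz => hker.abs_gramKernel_sub_midpointGramKernel_le hm (hsub hx) (hsub hz))
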